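/- arXiv:1412.0917 — 5 statements merged into one kernel-verified Lean document; each statement's English description precedes it below -/
import Mathlib

section
/- Smallness additivity: Suppose B_1, B_2, …, B_n are subsets of ω^{<ω}, k_1, k_2, …, k_n are integers, and σ ∈ ω^{<ω}. If B_i is k_i-small above σ for every i ≤ n, then ⋃_i B_i is (Σ_i k_i)-small above σ. -/
/-- A finite set of strings (lists of naturals) is a tree if it is closed under prefixes. -/
def PrefixClosed (T : Finset (List ℕ)) : Prop :=
  ∀ τ ∈ T, ∀ ρ : List ℕ, ρ <+: τ → ρ ∈ T

/-- `τ` is a leaf of the finite tree `T`: it belongs to `T` and has no child in `T`. -/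
def IsLeaf (T : Finset (List ℕ)) (τ : List ℕ) : Prop :=
  τ ∈ T ∧ ∀ a : ℕ, τ ++ [a] ∉ T

/-- `T` is a finite tree that is `k`-bushy above `σ`: it is a tree with stem `σ`
(every element is comparable with `σ`) and every non-leaf element of `T` extending `σ`
has at least `k` immediate children in `T`. -/
def Bushy (k : ℕ) (σ : List ℕ) (T : Finset (List ℕ)) : Prop :=
  PrefixClosed T ∧ σ ∈ T ∧ (∀ τ ∈ T, τ <+: σ ∨ σ <+: τ) ∧
    ∀ τ ∈ T, σ <+: τ → ¬ IsLeaf T τ →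
      ∃ S : Finset ℕ, k ≤ S.card ∧ ∀ a ∈ S, τ ++ [a] ∈ T

/-- `B` is `k`-big above `σ`: there is a finite tree `k`-bushy above `σ`
all of whose leaves are in `B`. -/
def BigAbove (k : ℕ) (σ : List ℕ) (B : Set (List ℕ)) : Prop :=
  ∃ T : Finset (List ℕ), Bushy k σ T ∧ ∀ τ : List ℕ, IsLeaf T τ → τ ∈ B

/-- `B` is `k`-small above `σ`: it is not `k`-big above `σ`. -/
def SmallAbove (k : ℕ) (σ : List ℕ) (B : Set (List ℕ)) : Prop :=
  ¬ BigAbove k σ B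

/-- A prefix of `τ ++ [a]` is a prefix of `τ` or equals `τ ++ [a]`. -/
lemma prefix_snoc {x τ : List ℕ} {a : ℕ} (h : x <+: τ ++ [a]) : x <+: τ ∨ x = τ ++ [a] := by
  rcases le_or_gt x.length τ.length with hl | hl
  · exact Or.inl (List.prefix_of_prefix_length_le h (τ.prefix_append [a]) hl)
  · right
    apply h.eq_of_length
    have h1 := h.length_le
    simp only [List.length_append, List.length_cons, List.length_nil] at h1 ⊢
    omega

/-- A proper prefix can be extended by one element while staying a prefix. -/
lemma proper_ext {x τ : List ℕ} (h : x <+: τ) (hne : x ≠ τ) : ∃ c, x ++ [c] <+: τ := by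
  obtain ⟨t, rfl⟩ := h
  cases t with
  | nil => simp at hne
  | cons c t => exact ⟨c, t, by simp⟩

/-- A nonempty finite tree has a leaf. -/
lemma leaf_exists {T : Finset (List ℕ)} (h : T.Nonempty) : ∃ τ, IsLeaf T τ := by
  obtain ⟨τ, hτ, hmax⟩ := T.exists_max_image List.length h
  refine ⟨τ, hτ, fun a ha => ?_⟩
  have := hmax _ ha
  simp at this

/-- The chain of prefixes of `τ` witnesses that any `B` containing `τ` is `k`-big above `τ`. -/
lemma chain_big (k : ℕ) (τ : List ℕ) (B : Set (List ℕ)) (hτ : τ ∈ B) : BigAbove k τ B := by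
  have hmem : ∀ x : List ℕ, x ∈ τ.inits.toFinset ↔ x <+: τ := by
    intro x; simp [List.mem_inits]
  have hτleaf : IsLeaf τ.inits.toFinset τ := by
    refine ⟨(hmem τ).2 (List.prefix_refl τ), fun a ha => ?_⟩
    have := ((hmem _).1 ha).length_le
    simp at this
  refine ⟨τ.inits.toFinset, ⟨?_, (hmem τ).2 (List.prefix_refl τ), ?_, ?_⟩, ?_⟩
  · intro x hx ρ hρ
    exact (hmem ρ).2 (hρ.trans ((hmem x).1 hx))
  · intro x hx
    exact Or.inl ((hmem x).1 hx)
  · intro ρ hρ hτρ hnl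
    exfalso
    have hρτ := (hmem ρ).1 hρ
    have : ρ = τ := hρτ.eq_of_length (le_antisymm hρτ.length_le hτρ.length_le)
    subst this
    exact hnl hτleaf
  · rintro x ⟨hx, hxl⟩
    have hxτ := (hmem x).1 hx
    by_cases he : x = τ
    · subst he; exact hτ
    · obtain ⟨c, hc⟩ := proper_ext hxτ he
      exact absurd ((hmem _).2 hc) (hxl c)

/-- Gluing: if `B` is `k`-big above at least `k` children of `τ` (and at least one child),
then `B` is `k`-big above `τ`. -/
lemma glue {k : ℕ} {τ : List ℕ} {B : Set (List ℕ)} (S : Finset ℕ) (hne : S.Nonempty)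
    (hcard : k ≤ S.card) (hbig : ∀ a ∈ S, BigAbove k (τ ++ [a]) B) : BigAbove k τ B := by
  classical
  choose! f hf using hbig
  set T' := τ.inits.toFinset ∪ S.biUnion f with hT'
  have hmem : ∀ x : List ℕ, x ∈ T' ↔ x <+: τ ∨ ∃ a ∈ S, x ∈ f a := by
    intro x; simp [hT', List.mem_inits]
  have comp : ∀ a ∈ S, ∀ x ∈ f a, x <+: τ ∨ τ ++ [a] <+: x := by
    intro a ha x hx
    rcases (hf a ha).1.2.2.1 x hx with h | h
    · rcases prefix_snoc h with h' | rfl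
      · exact Or.inl h'
      · exact Or.inr (List.prefix_refl _)
    · exact Or.inr h
  have disj : ∀ a ∈ S, ∀ b : ℕ, ∀ x ∈ f a, τ ++ [b] <+: x → a = b := by
    intro a ha b x hx hbx
    rcases comp a ha x hx with h | h
    · exfalso
      have h1 := hbx.length_le
      have h2 := h.length_le
      simp only [List.length_append, List.length_cons, List.length_nil] at h1
      omega
    · have heq : τ ++ [a] = τ ++ [b] :=
        (List.prefix_of_prefix_length_le h hbx (by simp)).eq_of_length (by simp)
      simpa using heq
  refine ⟨T', ⟨?_, (hmem τ).2 (Or.inl (List.prefix_refl _)), ?_, ?_⟩, ?_⟩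
  · -- prefix closed
    intro x hx ρ hρ
    rcases (hmem x).1 hx with h | ⟨a, ha, hxa⟩
    · exact (hmem ρ).2 (Or.inl (hρ.trans h))
    · exact (hmem ρ).2 (Or.inr ⟨a, ha, (hf a ha).1.1 x hxa ρ hρ⟩)
  · -- comparability with τ
    intro x hx
    rcases (hmem x).1 hx with h | ⟨a, ha, hxa⟩
    · exact Or.inl h
    · rcases comp a ha x hxa with h | h
      · exact Or.inl h
      · exact Or.inr ((τ.prefix_append [a]).trans h)
  · -- bushiness
    intro ρ hρ hτρ hnl
    by_cases hρτ : ρ = τ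
    · subst hρτ
      exact ⟨S, hcard, fun a ha => (hmem _).2 (Or.inr ⟨a, ha, (hf a ha).1.2.1⟩)⟩
    · have hfa : ∃ a ∈ S, ρ ∈ f a := by
        rcases (hmem ρ).1 hρ with h | h
        · exact absurd (h.eq_of_length (le_antisymm h.length_le hτρ.length_le)) hρτ
        · exact h
      obtain ⟨a, ha, hρa⟩ := hfa
      have hext : τ ++ [a] <+: ρ := by
        rcases comp a ha ρ hρa with h | h
        · exact absurd (h.eq_of_length (le_antisymm h.length_le hτρ.length_le)) hρτ
        · exact h
      have hnl' : ¬ IsLeaf (f a) ρ := by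
        intro hl
        apply hnl
        refine ⟨hρ, fun c hc => ?_⟩
        rcases (hmem _).1 hc with h | ⟨b, hb, hcb⟩
        · have h1 := h.length_le
          have h2 := hτρ.length_le
          simp only [List.length_append, List.length_cons, List.length_nil] at h1
          omega
        · have hab : b = a := disj b hb a (ρ ++ [c]) hcb (hext.trans (ρ.prefix_append [c]))
          exact hl.2 c (hab ▸ hcb)
      obtain ⟨S'', hS''card, hS''⟩ := (hf a ha).1.2.2.2 ρ hρa hext hnl'
      exact ⟨S'', hS''card, fun c hc => (hmem _).2 (Or.inr ⟨a, ha, hS'' c hc⟩)⟩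
  · -- leaves are in B
    rintro x ⟨hx, hxl⟩
    rcases (hmem x).1 hx with h | ⟨a, ha, hxa⟩
    · exfalso
      by_cases he : x = τ
      · subst he
        obtain ⟨a, ha⟩ := hne
        exact hxl a ((hmem _).2 (Or.inr ⟨a, ha, (hf a ha).1.2.1⟩))
      · obtain ⟨c, hc⟩ := proper_ext h he
        exact hxl c ((hmem _).2 (Or.inl hc))
    · exact (hf a ha).2 x ⟨hxa, fun c hc => hxl c ((hmem _).2 (Or.inr ⟨a, ha, hc⟩))⟩

/-- Two-set splitting lemma. -/
lemma big_split {k l : ℕ} {σ : List ℕ} {B C : Set (List ℕ)}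
    (h : BigAbove (k + l) σ (B ∪ C)) : BigAbove k σ B ∨ BigAbove l σ C := by
  classical
  obtain ⟨T, ⟨hpc, hσ, hcomp, hbushy⟩, hleaf⟩ := h
  suffices H : ∀ m : ℕ, ∀ τ ∈ T, σ <+: τ → T.sup List.length < τ.length + m →
      BigAbove k τ B ∨ BigAbove l τ C by
    exact H (T.sup List.length + 1) σ hσ (List.prefix_refl σ) (by omega)
  intro m
  induction m with
  | zero =>
    intro τ hτ _ hlen
    exact absurd (Finset.le_sup (f := List.length) hτ) (by omega)
  | succ m ih =>
    intro τ hτ hστ hlen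
    by_cases hlf : IsLeaf T τ
    · rcases hleaf τ hlf with hB | hC
      · exact Or.inl (chain_big k τ B hB)
      · exact Or.inr (chain_big l τ C hC)
    · obtain ⟨S, hScard, hSchild⟩ := hbushy τ hτ hστ hlf
      have hchild : ∃ a, τ ++ [a] ∈ T := by
        by_contra hcon; push_neg at hcon; exact hlf ⟨hτ, hcon⟩
      obtain ⟨a₀, ha₀⟩ := hchild
      set S' := insert a₀ S with hS'def
      have hS'card : k + l ≤ S'.card :=
        hScard.trans (Finset.card_le_card (Finset.subset_insert _ _))
      have hS'child : ∀ a ∈ S', τ ++ [a] ∈ T := by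
        intro a ha
        rcases Finset.mem_insert.mp ha with rfl | ha
        · exact ha₀
        · exact hSchild a ha
      have hlab : ∀ a ∈ S', BigAbove k (τ ++ [a]) B ∨ BigAbove l (τ ++ [a]) C := by
        intro a ha
        refine ih (τ ++ [a]) (hS'child a ha) (hστ.trans (τ.prefix_append [a])) ?_
        simp only [List.length_append, List.length_cons, List.length_nil]
        omega
      set SB := S'.filter (fun a => BigAbove k (τ ++ [a]) B) with hSBdef
      set SC := S'.filter (fun a => BigAbove l (τ ++ [a]) C) with hSCdef
      have hBmem : ∀ a ∈ SB, BigAbove k (τ ++ [a]) B := fun a ha => (Finset.mem_filter.mp ha).2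
      have hCmem : ∀ a ∈ SC, BigAbove l (τ ++ [a]) C := fun a ha => (Finset.mem_filter.mp ha).2
      have hcover : S' ⊆ SB ∪ SC := by
        intro a ha
        rcases hlab a ha with hx | hx
        · exact Finset.mem_union_left _ (Finset.mem_filter.mpr ⟨ha, hx⟩)
        · exact Finset.mem_union_right _ (Finset.mem_filter.mpr ⟨ha, hx⟩)
      have hsum : S'.card ≤ SB.card + SC.card :=
        (Finset.card_le_card hcover).trans (Finset.card_union_le _ _)
      by_cases hb : k ≤ SB.card ∧ SB.Nonempty
      · exact Or.inl (glue SB hb.2 hb.1 hBmem)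
      · have hc : SC.Nonempty ∧ l ≤ SC.card := by
          rw [not_and_or] at hb
          rcases hb with hb | hb
          · push_neg at hb
            refine ⟨Finset.card_pos.mp (by omega), by omega⟩
          · have hemp : SB = ∅ := Finset.not_nonempty_iff_eq_empty.mp hb
            have h2 : S' ⊆ SC := by
              intro a ha
              have := hcover ha
              simpa [hemp] using this
            refine ⟨⟨a₀, h2 (Finset.mem_insert_self _ _)⟩, ?_⟩
            calc l ≤ S'.card := by omega
              _ ≤ SC.card := Finset.card_le_card h2
        exact Or.inr (glue SC hc.1 hc.2 hCmem)

/-- The empty set is `k`-small above any `σ`. -/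
lemma emptySetSmall (k : ℕ) (σ : List ℕ) : SmallAbove k σ ∅ := by
  rintro ⟨T, ⟨hpc, hσ, -, -⟩, hleaf⟩
  obtain ⟨τ, hτ⟩ := leaf_exists ⟨σ, hσ⟩
  exact hleaf τ hτ

/-- **Smallness additivity.** If `B i` is `k i`-small above `σ` for each `i : Fin n`,
then `⋃ i, B i` is `(∑ i, k i)`-small above `σ`. -/
theorem smallness_additivity (n : ℕ) (B : Fin n → Set (List ℕ)) (k : Fin n → ℕ)
    (σ : List ℕ) (h : ∀ i : Fin n, SmallAbove (k i) σ (B i)) :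
    SmallAbove (∑ i : Fin n, k i) σ (⋃ i : Fin n, B i) := by
  induction n with
  | zero =>
    have he : (⋃ i : Fin 0, B i) = ∅ := Set.iUnion_of_empty B
    rw [he]
    have hs : (∑ i : Fin 0, k i) = 0 := by simp
    rw [hs]
    exact emptySetSmall 0 σ
  | succ n IH =>
    intro hbig
    have hsum : (∑ i : Fin (n + 1), k i) = k 0 + ∑ i : Fin n, k i.succ := Fin.sum_univ_succ k
    have hun : (⋃ i : Fin (n + 1), B i) = B 0 ∪ ⋃ i : Fin n, B i.succ := by
      ext x
      simp [Set.mem_iUnion, Fin.exists_fin_succ]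
    rw [hsum, hun] at hbig
    rcases big_split hbig with h1 | h2
    · exact h 0 h1
    · exact IH (fun i => B i.succ) (fun i => k i.succ) (fun i => h i.succ) h2
end

section
/- The set B_DNC of strings that are not initial segments of any diagonally non-computable function is 2-small above the empty string. -/
/-- The set of strings that are not initial segments of any diagonally non-computable
function: those `σ` such that for some `e < |σ|`, the `e`-th partial computable function
(under the standard enumeration by `Nat.Partrec.Code`) halts on `e` with value `σ(e)`. -/
def BDNC : Set (List ℕ) :=
  {σ : List ℕ | ∃ e < σ.length,
    σ.getD e 0 ∈ Nat.Partrec.Code.eval (Denumerable.ofNat Nat.Partrec.Code e) e}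

/-!
A string outside `B_DNC` has at most one child in `B_DNC`: the only new way for `τ ++ [a]` to
enter is `Φ_{|τ|}(|τ|) = a`. So in any `2`-bushy tree above `[]`, a longest node outside
`B_DNC` is not a leaf and has a child outside `B_DNC`, contradicting maximality.
-/

theorem smallAbove_of_card_children_lt {k : ℕ} {σ : List ℕ} {B : Set (List ℕ)} (hσ : σ ∉ B)
    (hB : ∀ τ, σ <+: τ → τ ∉ B → ∀ S : Finset ℕ, (∀ a ∈ S, τ ++ [a] ∈ B) → S.card < k) :
    SmallAbove k σ B := by
  classical
  rintro ⟨T, ⟨-, hσT, -, hbushy⟩, hleaf⟩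
  set G := T.filter fun τ => σ <+: τ ∧ τ ∉ B
  obtain ⟨τ, hτG, hτmax⟩ := G.exists_max_image List.length ⟨σ, by simp [G, hσT, hσ]⟩
  obtain ⟨hτT, hστ, hτB⟩ := by simpa only [G, Finset.mem_filter] using hτG
  obtain ⟨S, hkS, hST⟩ := hbushy τ hτT hστ fun h => hτB (hleaf τ h)
  obtain ⟨a, haS, haB⟩ : ∃ a ∈ S, τ ++ [a] ∉ B := by
    by_contra! h
    exact (hB τ hστ hτB S h).not_ge hkS
  have hchildG : τ ++ [a] ∈ G :=
    Finset.mem_filter.mpr ⟨hST a haS, hστ.trans (List.prefix_append _ _), haB⟩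
  simpa using hτmax _ hchildG

theorem append_singleton_mem_BDNC_iff {τ : List ℕ} {a : ℕ} :
    τ ++ [a] ∈ BDNC ↔
      τ ∈ BDNC ∨ a ∈ Nat.Partrec.Code.eval (Denumerable.ofNat _ τ.length) τ.length := by
  simp only [BDNC, Set.mem_ofPred_eq, List.length_append, List.length_singleton,
    Nat.lt_succ_iff_lt_or_eq, or_and_right, exists_or, exists_eq_left]
  refine or_congr (exists_congr fun e => and_congr_right fun he => ?_) ?_
  · rw [List.getD_append _ _ _ _ he]
  · simp

theorem BDNC_children_subsingleton {τ : List ℕ} (hτ : τ ∉ BDNC) :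
    {a | τ ++ [a] ∈ BDNC}.Subsingleton := fun _ ha _ hb =>
  Part.mem_unique ((append_singleton_mem_BDNC_iff.mp ha).resolve_left hτ)
    ((append_singleton_mem_BDNC_iff.mp hb).resolve_left hτ)

/-- **`B_DNC` is 2-small above the empty string.** -/
theorem bdnc_two_small : SmallAbove 2 [] BDNC := by
  refine smallAbove_of_card_children_lt (by simp [BDNC]) fun τ _ hτ S hS => ?_
  exact (Finset.card_le_one.mpr fun a ha b hb =>
    BDNC_children_subsingleton hτ (hS a ha) (hS b hb)).trans_lt one_lt_two
end

section
/- Extension to a big set avoiding a small set: Fix an integer k, a string σ ∈ ω^{<ω}, and sets B, C ⊆ ω^{<ω}. If B is k-small above σ and C is k-big above σ, then there exists a string τ ∈ C with τ ⪰ σ such that B is k-small above τ. -/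
/-- If `ρ` is a proper prefix of `τ`, some one-step extension of `ρ` is still a prefix. -/
lemma prefix_step {ρ τ : List ℕ} (h : ρ <+: τ) (hne : ρ ≠ τ) : ∃ a, ρ ++ [a] <+: τ := by
  obtain ⟨t, rfl⟩ := h
  cases t with
  | nil => simp at hne
  | cons a t => exact ⟨a, t, by simp⟩

/-- In a prefix-closed set, nothing in the set strictly extends a leaf. -/
lemma leaf_max {T : Finset (List ℕ)} (hpc : PrefixClosed T) {τ τ' : List ℕ}
    (hτ : IsLeaf T τ) (hτ' : τ' ∈ T) (h : τ <+: τ') : τ' = τ := by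
  by_contra hne
  obtain ⟨a, ha⟩ := prefix_step h (fun e => hne e.symm)
  exact hτ.2 a (hpc τ' hτ' _ ha)

/-- Every leaf of a bushy tree above `σ` extends `σ`. -/
lemma leaf_ext {k : ℕ} {σ : List ℕ} {T : Finset (List ℕ)} (hT : Bushy k σ T)
    {τ : List ℕ} (hτ : IsLeaf T τ) : σ <+: τ := by
  rcases hT.2.2.1 τ hτ.1 with h | h
  · rcases eq_or_ne τ σ with rfl | hne
    · exact List.prefix_rfl
    · obtain ⟨a, ha⟩ := prefix_step h hne
      exact absurd (hT.1 σ hT.2.1 _ ha) (hτ.2 a)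
  · exact h

/-- **Extension to a big set avoiding a small set.** If `B` is `k`-small above `σ` and
`C` is `k`-big above `σ`, then some `τ ∈ C` extending `σ` keeps `B` `k`-small above it. -/
theorem big_extension_avoiding_small (k : ℕ) (σ : List ℕ) (B C : Set (List ℕ))
    (hB : SmallAbove k σ B) (hC : BigAbove k σ C) :
    ∃ τ ∈ C, σ <+: τ ∧ SmallAbove k τ B := by
  classical
  by_contra hcon
  push_neg at hcon
  obtain ⟨T, hTb, hTleaf⟩ := hC
  obtain ⟨hTpc, hTσ, hTcomp, hTbr⟩ := hTb
  have hBig : ∀ τ, IsLeaf T τ → BigAbove k τ B := by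
    intro τ hτ
    have hστ : σ <+: τ := leaf_ext ⟨hTpc, hTσ, hTcomp, hTbr⟩ hτ
    have := hcon τ (hTleaf τ hτ) hστ
    simpa [SmallAbove, not_not] using this
  choose! f hf1 hf2 using hBig
  set L : Finset (List ℕ) := T.filter (fun τ => IsLeaf T τ) with hL
  set T' : Finset (List ℕ) := T ∪ L.biUnion f with hT'
  have memT' : ∀ μ : List ℕ, μ ∈ T' ↔ μ ∈ T ∨ ∃ τ, IsLeaf T τ ∧ μ ∈ f τ := by
    intro μ
    simp only [hT', hL, Finset.mem_union, Finset.mem_biUnion, Finset.mem_filter]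
    constructor
    · rintro (h | ⟨τ, ⟨hτT, hτl⟩, hμ⟩)
      · exact Or.inl h
      · exact Or.inr ⟨τ, hτl, hμ⟩
    · rintro (h | ⟨τ, hτl, hμ⟩)
      · exact Or.inl h
      · exact Or.inr ⟨τ, ⟨hτl.1, hτl⟩, hμ⟩
  -- basic facts about the glued trees
  have hfb : ∀ τ, IsLeaf T τ → Bushy k τ (f τ) := hf1
  have hfB : ∀ τ, IsLeaf T τ → ∀ μ, IsLeaf (f τ) μ → μ ∈ B := hf2
  -- key absorption lemma: a leaf of a glued piece is a leaf of T'
  have absorb : ∀ τ μ, IsLeaf T τ → μ ∈ f τ → τ <+: μ → IsLeaf (f τ) μ →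
      ∀ a, μ ++ [a] ∉ T' := by
    intro τ μ hτ hμ hτμ hleaf a hmem
    rcases (memT' _).1 hmem with h | ⟨τ', hτ', hμa⟩
    · -- μ ++ [a] ∈ T : then μ ∈ T, so μ = τ, contradicting τ a leaf of T
      have hμT : μ ∈ T := hTpc _ h μ (by exact ⟨[a], rfl⟩)
      have : μ = τ := leaf_max hTpc hτ hμT hτμ
      subst this
      exact hτ.2 a h
    · -- μ ++ [a] ∈ f τ'
      have hcomp := (hfb τ' hτ').2.2.1 _ hμa
      rcases hcomp with h | h
      · -- μ ++ [a] <+: τ' : then μ ∈ T, μ = τ, contradiction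
        have hμT : μ ∈ T := hTpc τ' hτ'.1 μ (List.IsPrefix.trans ⟨[a], rfl⟩ h)
        have : μ = τ := leaf_max hTpc hτ hμT hτμ
        subst this
        exact hτ.2 a (hTpc τ' hτ'.1 _ h)
      · -- τ' <+: μ ++ [a]
        rw [List.prefix_concat_iff] at h
        rcases h with h | h
        · -- τ' = μ ++ [a] : τ' ∈ T extends τ strictly, contradicting leaf τ
          subst h
          have hμT : μ ∈ T := hTpc _ hτ'.1 μ ⟨[a], rfl⟩
          have : μ = τ := leaf_max hTpc hτ hμT hτμ
          subst this
          exact hτ.2 a hτ'.1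
        · -- τ' <+: μ : τ and τ' comparable, both leaves, so τ' = τ
          have hcmp := List.prefix_or_prefix_of_prefix h hτμ
          have : τ' = τ := by
            rcases hcmp with h' | h'
            · exact (leaf_max hTpc hτ' hτ.1 h').symm ▸ rfl
            · exact leaf_max hTpc hτ hτ'.1 h'
          subst this
          exact hleaf.2 a hμa
  -- T' witnesses that B is big above σ, contradicting hB
  apply hB
  refine ⟨T', ⟨?_, ?_, ?_, ?_⟩, ?_⟩
  · -- prefix closed
    intro μ hμ ρ hρ
    rcases (memT' μ).1 hμ with h | ⟨τ, hτ, h⟩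
    · exact (memT' ρ).2 (Or.inl (hTpc μ h ρ hρ))
    · exact (memT' ρ).2 (Or.inr ⟨τ, hτ, (hfb τ hτ).1 μ h ρ hρ⟩)
  · exact (memT' σ).2 (Or.inl hTσ)
  · -- comparability with σ
    intro μ hμ
    rcases (memT' μ).1 hμ with h | ⟨τ, hτ, h⟩
    · exact hTcomp μ h
    · have hστ : σ <+: τ := leaf_ext ⟨hTpc, hTσ, hTcomp, hTbr⟩ hτ
      rcases (hfb τ hτ).2.2.1 μ h with h' | h'
      · exact List.prefix_or_prefix_of_prefix h' hστ
      · exact Or.inr (hστ.trans h')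
  · -- branching
    intro μ hμ hσμ hnl
    by_cases hμT : μ ∈ T
    · by_cases hlf : IsLeaf T μ
      · -- μ is a leaf of T: use its glued tree f μ
        have hroot : μ ∈ f μ := (hfb μ hlf).2.1
        by_cases hlf2 : IsLeaf (f μ) μ
        · exact absurd ⟨hμ, absorb μ μ hlf hroot List.prefix_rfl hlf2⟩ hnl
        · obtain ⟨S, hS, hSmem⟩ := (hfb μ hlf).2.2.2 μ hroot List.prefix_rfl hlf2
          exact ⟨S, hS, fun a ha => (memT' _).2 (Or.inr ⟨μ, hlf, hSmem a ha⟩)⟩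
      · obtain ⟨S, hS, hSmem⟩ := hTbr μ hμT hσμ hlf
        exact ⟨S, hS, fun a ha => (memT' _).2 (Or.inl (hSmem a ha))⟩
    · -- μ lies strictly inside some glued tree
      rcases (memT' μ).1 hμ with h | ⟨τ, hτ, h⟩
      · exact absurd h hμT
      · have hτμ : τ <+: μ := by
          rcases (hfb τ hτ).2.2.1 μ h with h' | h'
          · exact absurd (hTpc τ hτ.1 μ h') hμT
          · exact h'
        by_cases hlf2 : IsLeaf (f τ) μ
        · exact absurd ⟨hμ, absorb τ μ hτ h hτμ hlf2⟩ hnl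
        · obtain ⟨S, hS, hSmem⟩ := (hfb τ hτ).2.2.2 μ h hτμ hlf2
          exact ⟨S, hS, fun a ha => (memT' _).2 (Or.inr ⟨τ, hτ, hSmem a ha⟩)⟩
  · -- all leaves of T' are in B
    intro μ hμ
    obtain ⟨hμT', hμnc⟩ := hμ
    rcases (memT' μ).1 hμT' with h | ⟨τ, hτ, h⟩
    · have hlf : IsLeaf T μ := ⟨h, fun a ha => hμnc a ((memT' _).2 (Or.inl ha))⟩
      have hroot : μ ∈ f μ := (hfb μ hlf).2.1
      have : IsLeaf (f μ) μ :=
        ⟨hroot, fun a ha => hμnc a ((memT' _).2 (Or.inr ⟨μ, hlf, ha⟩))⟩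
      exact hfB μ hlf μ this
    · have : IsLeaf (f τ) μ :=
        ⟨h, fun a ha => hμnc a ((memT' _).2 (Or.inr ⟨τ, hτ, ha⟩))⟩
      exact hfB τ hτ μ this
end

section
/- Every condition can be extended to a roomy condition: Let h be a computable-order-like function, i.e. a nondecreasing unbounded function ℕ → ℕ with h(i) ≥ 1 for all i. Let σ ∈ h^{<ω} and let B ⊆ h^{<ω} be h(|σ|)-small above σ. Then there exist an integer k and a string τ ∈ h^{<ω} with τ ⪰ σ such that B is k-small above τ and h(|τ|) ≥ 4k; in fact one may take k = h(|σ|). -/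
/-- `σ` is a string over `h`: a finite sequence with `σ(i) < h(i)` for every `i < |σ|`. -/
def StringH (h : ℕ → ℕ) (σ : List ℕ) : Prop :=
  ∀ i < σ.length, σ.getD i 0 < h i

/-- `T ⊆ h^{<ω}` is a finite tree `k`-bushy above `σ`: a tree of strings over `h`
with stem `σ` in which every non-leaf element extending `σ` has at least `k`
immediate children in `T`. -/
def BushyH (h : ℕ → ℕ) (k : ℕ) (σ : List ℕ) (T : Finset (List ℕ)) : Prop :=
  (∀ τ ∈ T, StringH h τ) ∧ PrefixClosed T ∧ σ ∈ T ∧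
    (∀ τ ∈ T, τ <+: σ ∨ σ <+: τ) ∧
    ∀ τ ∈ T, σ <+: τ → ¬ IsLeaf T τ →
      ∃ S : Finset ℕ, k ≤ S.card ∧ ∀ a ∈ S, τ ++ [a] ∈ T

/-- `B` is `k`-big above `σ` (within strings over `h`). -/
def BigH (h : ℕ → ℕ) (k : ℕ) (σ : List ℕ) (B : Set (List ℕ)) : Prop :=
  ∃ T : Finset (List ℕ), BushyH h k σ T ∧ ∀ τ : List ℕ, IsLeaf T τ → τ ∈ B

/-- `B` is `k`-small above `σ` (within strings over `h`). -/
def SmallH (h : ℕ → ℕ) (k : ℕ) (σ : List ℕ) (B : Set (List ℕ)) : Prop :=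
  ¬ BigH h k σ B

/- ### Auxiliary lemmas -/

lemma stringH_prefix {h : ℕ → ℕ} {ρ τ : List ℕ} (hp : ρ <+: τ) (hτ : StringH h τ) :
    StringH h ρ := by
  obtain ⟨t, rfl⟩ := hp
  intro i hi
  rw [← List.getD_append _ t 0 i hi]
  exact hτ i (by simp; omega)

lemma getD_concat_self {ρ : List ℕ} {a : ℕ} : (ρ ++ [a]).getD ρ.length 0 = a := by
  simp [List.getD_eq_getElem?_getD]

lemma stringH_append {h : ℕ → ℕ} {τ : List ℕ} {a : ℕ} (hτ : StringH h τ)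
    (ha : a < h τ.length) : StringH h (τ ++ [a]) := by
  intro i hi
  simp only [List.length_append, List.length_singleton] at hi
  rcases lt_or_eq_of_le (Nat.lt_succ_iff.mp hi) with hlt | heq
  · rw [List.getD_append _ _ 0 i hlt]; exact hτ i hlt
  · subst heq; rw [getD_concat_self]; exact ha

/-- The full tree of extensions of `σ` over `h` at level `j`. -/
def extTree (h : ℕ → ℕ) (σ : List ℕ) : ℕ → Finset (List ℕ)
  | 0 => {σ}
  | j + 1 => (extTree h σ j).biUnion fun τ =>
      (Finset.range (h τ.length)).image fun a => τ ++ [a]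

lemma mem_extTree {h : ℕ → ℕ} {σ : List ℕ} (hσ : StringH h σ) {j : ℕ} {τ : List ℕ} :
    τ ∈ extTree h σ j ↔ StringH h τ ∧ σ <+: τ ∧ τ.length = σ.length + j := by
  induction j generalizing τ with
  | zero =>
    simp only [extTree, Finset.mem_singleton]
    constructor
    · rintro rfl; exact ⟨hσ, List.prefix_rfl, by omega⟩
    · rintro ⟨_, hp, hl⟩; exact (hp.eq_of_length (by omega)).symm
  | succ j ih =>
    simp only [extTree, Finset.mem_biUnion, Finset.mem_image, Finset.mem_range]
    constructor
    · rintro ⟨ρ, hρ, a, ha, rfl⟩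
      obtain ⟨h1, h2, h3⟩ := ih.mp hρ
      exact ⟨stringH_append h1 ha, h2.trans ⟨[a], rfl⟩, by simp [h3]; omega⟩
    · rintro ⟨hs, hp, hl⟩
      have hne : τ ≠ [] := by intro hnil; rw [hnil] at hl; simp at hl
      obtain ⟨ρ, a, rfl⟩ : ∃ ρ a, τ = ρ ++ [a] :=
        ⟨τ.dropLast, τ.getLast hne, (List.dropLast_concat_getLast hne).symm⟩
      have hρl : ρ.length = σ.length + j := by simp at hl; omega
      have hsd : StringH h ρ := stringH_prefix ⟨[a], rfl⟩ hs
      have hσd : σ <+: ρ := by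
        rcases List.prefix_or_prefix_of_prefix hp ⟨[a], rfl⟩ with hc | hc
        · exact hc
        · have : ρ = σ := hc.eq_of_length (by have := hc.length_le; omega)
          rw [this]
      have hlast : a < h ρ.length := by
        have h2 := hs ρ.length (by simp)
        rwa [getD_concat_self] at h2
      exact ⟨ρ, ih.mpr ⟨hsd, hσd, hρl⟩, a, hlast, rfl⟩

/-- **Every condition can be extended to a roomy condition.** If `h` is nondecreasing,
unbounded and everywhere positive, `σ ∈ h^{<ω}` and `B ⊆ h^{<ω}` is `h(|σ|)`-small
above `σ`, then there are `k` and `τ ⪰ σ` in `h^{<ω}` with `B` `k`-small above `τ` and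
`h(|τ|) ≥ 4k`; in fact one may take `k = h(|σ|)`. -/
theorem extension_to_roomy (h : ℕ → ℕ) (hmono : Monotone h)
    (hunb : ∀ n : ℕ, ∃ i : ℕ, n ≤ h i) (hpos : ∀ i : ℕ, 1 ≤ h i)
    (σ : List ℕ) (hσ : StringH h σ)
    (B : Set (List ℕ)) (hB : ∀ τ ∈ B, StringH h τ)
    (hsmall : SmallH h (h σ.length) σ B) :
    ∃ (k : ℕ) (τ : List ℕ), StringH h τ ∧ σ <+: τ ∧ SmallH h k τ B ∧
      4 * k ≤ h τ.length ∧ k = h σ.length := by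
  classical
  set m := σ.length with hm
  set k := h m with hk
  obtain ⟨i, hi⟩ := hunb (4 * k)
  set n := max i m with hn
  have hmn : m ≤ n := le_max_right _ _
  have h4k : 4 * k ≤ h n := le_trans hi (hmono (le_max_left _ _))
  refine ⟨k, ?_⟩
  by_contra hcon
  push_neg at hcon
  have hall : ∀ τ : List ℕ, StringH h τ → σ <+: τ → τ.length = n → BigH h k τ B := by
    intro τ h1 h2 h3
    by_contra hbig
    exact (hcon τ h1 h2 hbig (by rw [h3]; exact h4k) rfl).elim
  set E : Finset (List ℕ) := extTree h σ (n - m) with hE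
  have hEmem : ∀ τ, τ ∈ E ↔ StringH h τ ∧ σ <+: τ ∧ τ.length = n := by
    intro τ
    rw [hE, mem_extTree hσ]
    constructor <;> (rintro ⟨a, b, c⟩; exact ⟨a, b, by omega⟩)
  have hchoice : ∀ τ : List ℕ, ∃ T : Finset (List ℕ), τ ∈ E →
      BushyH h k τ T ∧ ∀ ρ, IsLeaf T ρ → ρ ∈ B := by
    intro τ
    by_cases hτ : τ ∈ E
    · obtain ⟨s1, s2, s3⟩ := (hEmem τ).mp hτ
      obtain ⟨T, hT⟩ := hall τ s1 s2 s3
      exact ⟨T, fun _ => hT⟩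
    · exact ⟨∅, fun hmem => absurd hmem hτ⟩
  choose Tf hTf using hchoice
  have hTfB : ∀ ρ ∈ E, BushyH h k ρ (Tf ρ) := fun ρ hρ => (hTf ρ hρ).1
  have hTfL : ∀ ρ ∈ E, ∀ τ, IsLeaf (Tf ρ) τ → τ ∈ B := fun ρ hρ => (hTf ρ hρ).2
  set Pre : Finset (List ℕ) := (Finset.range (m + 1)).image (fun i => σ.take i) with hPre
  set Mid : Finset (List ℕ) := (Finset.range (n - m + 1)).biUnion (extTree h σ) with hMid
  set T : Finset (List ℕ) := Pre ∪ Mid ∪ E.biUnion Tf with hT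
  have hPreMem : ∀ τ, τ ∈ Pre ↔ τ <+: σ := by
    intro τ
    rw [hPre]
    simp only [Finset.mem_image, Finset.mem_range]
    constructor
    · rintro ⟨j, hj, rfl⟩; exact List.take_prefix _ _
    · intro hp
      exact ⟨τ.length, by have := hp.length_le; omega, (List.prefix_iff_eq_take.mp hp).symm⟩
  have hMidMem : ∀ τ, τ ∈ Mid ↔ StringH h τ ∧ σ <+: τ ∧ m ≤ τ.length ∧ τ.length ≤ n := by
    intro τ
    rw [hMid]
    simp only [Finset.mem_biUnion, Finset.mem_range]
    constructor
    · rintro ⟨j, hj, hmem⟩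
      obtain ⟨a, b, c⟩ := (mem_extTree hσ).mp hmem
      exact ⟨a, b, by omega, by omega⟩
    · rintro ⟨a, b, c, d⟩
      exact ⟨τ.length - m, by omega, (mem_extTree hσ).mpr ⟨a, b, by omega⟩⟩
  have hMidT : ∀ τ ∈ Mid, τ ∈ T := fun τ hτ =>
    Finset.mem_union_left _ (Finset.mem_union_right _ hτ)
  have hPreT : ∀ τ ∈ Pre, τ ∈ T := fun τ hτ =>
    Finset.mem_union_left _ (Finset.mem_union_left _ hτ)
  have hTfT : ∀ ρ ∈ E, ∀ τ ∈ Tf ρ, τ ∈ T := fun ρ hρ τ hτ =>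
    Finset.mem_union_right _ (Finset.mem_biUnion.mpr ⟨ρ, hρ, hτ⟩)
  have hTcases : ∀ τ ∈ T, τ ∈ Pre ∨ τ ∈ Mid ∨ ∃ ρ ∈ E, τ ∈ Tf ρ := by
    intro τ hτ
    rw [hT, Finset.mem_union, Finset.mem_union] at hτ
    rcases hτ with (hp | hmid) | htf
    · exact Or.inl hp
    · exact Or.inr (Or.inl hmid)
    · exact Or.inr (Or.inr (Finset.mem_biUnion.mp htf))
  have hstr : ∀ τ ∈ T, StringH h τ := by
    intro τ hτ
    rcases hTcases τ hτ with hp | hmid | ⟨ρ, hρ, hmem⟩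
    · exact stringH_prefix ((hPreMem τ).mp hp) hσ
    · exact ((hMidMem τ).mp hmid).1
    · exact (hTfB ρ hρ).1 τ hmem
  have hcomp : ∀ τ ∈ T, τ <+: σ ∨ σ <+: τ := by
    intro τ hτ
    rcases hTcases τ hτ with hp | hmid | ⟨ρ, hρ, hmem⟩
    · exact Or.inl ((hPreMem τ).mp hp)
    · exact Or.inr ((hMidMem τ).mp hmid).2.1
    · have hσρ : σ <+: ρ := ((hEmem ρ).mp hρ).2.1
      rcases (hTfB ρ hρ).2.2.2.1 τ hmem with hc | hc
      · exact List.prefix_or_prefix_of_prefix hc hσρ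
      · exact Or.inr (hσρ.trans hc)
  have hhigh : ∀ τ ∈ T, n ≤ τ.length → τ.take n ∈ E ∧ τ ∈ Tf (τ.take n) := by
    intro τ hτ hlen
    rcases hTcases τ hτ with hp | hmid | ⟨ρ, hρ, hmem⟩
    · have hp' := (hPreMem τ).mp hp
      have h1 : τ.length ≤ m := hp'.length_le
      have h2 : τ = σ := hp'.eq_of_length (by omega)
      subst h2
      have hτE : τ ∈ E := (hEmem τ).mpr ⟨hσ, List.prefix_rfl, by omega⟩
      have htake : τ.take n = τ := List.take_of_length_le (by omega)
      rw [htake]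
      exact ⟨hτE, (hTfB τ hτE).2.2.1⟩
    · obtain ⟨a, b, c, d⟩ := (hMidMem τ).mp hmid
      have hτE : τ ∈ E := (hEmem τ).mpr ⟨a, b, by omega⟩
      have htake : τ.take n = τ := List.take_of_length_le (by omega)
      rw [htake]
      exact ⟨hτE, (hTfB τ hτE).2.2.1⟩
    · have hρlen : ρ.length = n := ((hEmem ρ).mp hρ).2.2
      rcases (hTfB ρ hρ).2.2.2.1 τ hmem with hc | hc
      · have hττ : τ = ρ := hc.eq_of_length (by have := hc.length_le; omega)
        subst hττ
        have htake : τ.take n = τ := List.take_of_length_le (by omega)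
        rw [htake]
        exact ⟨hρ, hmem⟩
      · have : ρ = τ.take n := by
          have := List.prefix_iff_eq_take.mp hc
          rwa [hρlen] at this
        rw [← this]
        exact ⟨hρ, hmem⟩
  have hchild : ∀ τ : List ℕ, n ≤ τ.length → ∀ a, τ ++ [a] ∈ T → τ ++ [a] ∈ Tf (τ.take n) := by
    intro τ hlen a hmem
    have h2 : n ≤ (τ ++ [a]).length := by simp; omega
    obtain ⟨hE', hmem'⟩ := hhigh _ hmem h2
    have htake : (τ ++ [a]).take n = τ.take n := List.take_append_of_le_length hlen
    rwa [htake] at hmem'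
  have hbushy : BushyH h k σ T := by
    refine ⟨hstr, ?_, ?_, hcomp, ?_⟩
    · -- PrefixClosed
      intro τ hτ ρ hρ
      rcases hTcases τ hτ with hp | hmid | ⟨ρ', hρ', hmem⟩
      · exact hPreT _ ((hPreMem ρ).mpr (hρ.trans ((hPreMem τ).mp hp)))
      · obtain ⟨s1, s2, s3, s4⟩ := (hMidMem τ).mp hmid
        by_cases hlm : ρ.length ≤ m
        · rcases List.prefix_or_prefix_of_prefix hρ s2 with hc | hc
          · exact hPreT _ ((hPreMem ρ).mpr hc)
          · have : ρ = σ := (hc.eq_of_length (by have := hc.length_le; omega)).symm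
            exact hPreT _ ((hPreMem ρ).mpr (by rw [this]))
        · have hσρ : σ <+: ρ := by
            rcases List.prefix_or_prefix_of_prefix hρ s2 with hc | hc
            · exact absurd hc.length_le (by omega)
            · exact hc
          exact hMidT _ ((hMidMem ρ).mpr ⟨stringH_prefix hρ s1, hσρ, by omega,
            le_trans hρ.length_le s4⟩)
      · exact hTfT ρ' hρ' _ ((hTfB ρ' hρ').2.1 τ hmem ρ hρ)
    · -- σ ∈ T
      exact hPreT _ ((hPreMem σ).mpr List.prefix_rfl)
    · -- bushiness
      intro τ hτ hστ hleaf
      by_cases hlen : τ.length < n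
      · have hsτ : StringH h τ := hstr τ hτ
        have hmτ : m ≤ τ.length := hστ.length_le
        refine ⟨Finset.range (h τ.length), by rw [Finset.card_range, hk]; exact hmono hmτ, ?_⟩
        intro a ha
        rw [Finset.mem_range] at ha
        exact hMidT _ ((hMidMem _).mpr ⟨stringH_append hsτ ha, hστ.trans ⟨[a], rfl⟩,
          by simp; omega, by simp; omega⟩)
      · push_neg at hlen
        obtain ⟨hρE, hmemτ⟩ := hhigh τ hτ hlen
        have hρτ : τ.take n <+: τ := List.take_prefix _ _
        have hnl : ¬ IsLeaf (Tf (τ.take n)) τ := by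
          rintro ⟨_, hnoc⟩
          exact hleaf ⟨hτ, fun a hc => hnoc a (hchild τ hlen a hc)⟩
        obtain ⟨S, hS1, hS2⟩ := (hTfB _ hρE).2.2.2.2 τ hmemτ hρτ hnl
        exact ⟨S, hS1, fun a ha => hTfT _ hρE _ (hS2 a ha)⟩
  have hleafB : ∀ τ : List ℕ, IsLeaf T τ → τ ∈ B := by
    rintro τ ⟨hτT, hnoc⟩
    by_cases hlen : τ.length < n
    · exfalso
      have midchild : σ <+: τ → False := by
        intro hστ
        apply hnoc 0
        exact hMidT _ ((hMidMem _).mpr ⟨stringH_append (hstr τ hτT) (hpos _),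
          hστ.trans ⟨[0], rfl⟩, by have := hστ.length_le; simp; omega, by simp; omega⟩)
      rcases hcomp τ hτT with hp | hp
      · by_cases hlm : τ.length < m
        · apply hnoc (σ.getD τ.length 0)
          have hτeq : τ = σ.take τ.length := List.prefix_iff_eq_take.mp hp
          have heq : τ ++ [σ.getD τ.length 0] = σ.take (τ.length + 1) := by
            rw [List.take_succ, ← hτeq]
            congr 1
            have : σ[τ.length]? = some (σ.getD τ.length 0) := by
              rw [List.getD_eq_getElem?_getD, List.getElem?_eq_getElem hlm]
              rfl
            rw [this]
            rfl
          rw [heq]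
          exact hPreT _ ((hPreMem _).mpr (List.take_prefix _ _))
        · have : τ = σ := hp.eq_of_length (by have := hp.length_le; omega)
          exact midchild (by rw [this])
      · exact midchild hp
    · push_neg at hlen
      obtain ⟨hρE, hmemτ⟩ := hhigh τ hτT hlen
      apply hTfL _ hρE τ
      exact ⟨hmemτ, fun a hc => hnoc a (hTfT _ hρE _ hc)⟩
  exact hsmall ⟨T, hbushy, hleafB⟩
end

section
/- Characterization of extendible finite sets in locally 2-colorable graphs: Let G be a locally 2-colorable graph on vertex set ℕ and let F ⊆ ℕ be finite. Then F is 2-homogeneous for G (i.e. every finite V₀ ⊆ ℕ induces a subgraph of G admitting a proper 2-coloring that assigns color 0 to every vertex of V₀ ∩ F) if and only if no two vertices x, y ∈ F are the endpoints of a walk of odd length in G. -/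
/-!
Along a walk the colours of a proper 2-colouring alternate, so two vertices of colour `0` are
joined only by walks of even length. Conversely, take a proper 2-colouring of the subgraph
induced on `V₀` and flip it on every component of that subgraph containing a vertex of `H` of
colour `1`. Vertices of `H` in one component are joined by an even walk, so they had one colour,
and afterwards all of `H ∩ V₀` has colour `0`.
-/

/-- `G` is locally 2-colorable: every finite set of vertices induces a subgraph
admitting a proper 2-coloring. -/
def LocallyTwoColorable (G : SimpleGraph ℕ) : Prop :=
  ∀ V₀ : Finset ℕ, ∃ c : ℕ → Fin 2,
    ∀ x ∈ V₀, ∀ y ∈ V₀, G.Adj x y → c x ≠ c y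

/-- `H` is 2-homogeneous for `G`: every finite set `V₀` of vertices induces a subgraph
admitting a proper 2-coloring that colors every vertex of `V₀ ∩ H` with color `0`. -/
def TwoHomogeneous (G : SimpleGraph ℕ) (H : Set ℕ) : Prop :=
  ∀ V₀ : Finset ℕ, ∃ c : ℕ → Fin 2,
    (∀ x ∈ V₀, ∀ y ∈ V₀, G.Adj x y → c x ≠ c y) ∧
    ∀ x ∈ V₀, x ∈ H → c x = 0

namespace SimpleGraph

variable {V : Type*} {G : SimpleGraph V}

theorem Walk.apply_eq_iff_even_length {c : V → Fin 2} {u v : V} (p : G.Walk u v)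
    (hp : ∀ d ∈ p.darts, c d.fst ≠ c d.snd) : c u = c v ↔ Even p.length := by
  induction p with
  | nil => simp
  | cons h p ih =>
    have alternate : ∀ a b z : Fin 2, a ≠ b → (a = z ↔ ¬b = z) := by decide
    rw [length_cons, Nat.even_add_one, alternate _ _ _ (hp _ List.mem_cons_self),
      ih fun d hd => hp d (List.mem_cons_of_mem _ hd)]

theorem Coloring.exists_eq_zero_on {F : Set V} (C : G.Coloring (Fin 2))
    (hF : ∀ x ∈ F, ∀ y ∈ F, G.Reachable x y → C x = C y) :
    ∃ C' : G.Coloring (Fin 2), ∀ x ∈ F, C' x = 0 := by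
  classical
  let flip (x : V) : Prop := ∃ f ∈ F, G.Reachable x f ∧ C f = 1
  have flip_congr {x y : V} (h : G.Adj x y) : flip x ↔ flip y :=
    ⟨fun ⟨f, hf, hr, hc⟩ => ⟨f, hf, h.symm.reachable.trans hr, hc⟩,
      fun ⟨f, hf, hr, hc⟩ => ⟨f, hf, h.reachable.trans hr, hc⟩⟩
  let c (x : V) : Fin 2 := C x + if flip x then 1 else 0
  refine ⟨Coloring.mk c fun {x y} h => ?_, fun x hx => ?_⟩
  · simpa only [c, flip_congr h, ne_eq, add_left_inj] using C.valid h
  · change c x = 0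
    by_cases hx1 : C x = 1
    · simp [c, hx1, show flip x from ⟨x, hx, .rfl, hx1⟩]
    · have no_flip : ¬flip x := fun ⟨f, hf, hr, hc⟩ => hx1 (hc ▸ hF x hx f hf hr)
      simp only [c, no_flip, if_false, add_zero]
      omega

end SimpleGraph

open SimpleGraph

theorem TwoHomogeneous.even_length {G : SimpleGraph ℕ} {H : Set ℕ} (h : TwoHomogeneous G H)
    {x y : ℕ} (hx : x ∈ H) (hy : y ∈ H) (w : G.Walk x y) : Even w.length := by
  obtain ⟨c, hc, hc0⟩ := h w.support.toFinset
  have mem {z : ℕ} (hz : z ∈ w.support) : z ∈ w.support.toFinset := List.mem_toFinset.2 hz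
  refine (w.apply_eq_iff_even_length (c := c) fun d hd => ?_).1 ?_
  · exact hc _ (mem (w.dart_fst_mem_support_of_mem_darts hd))
      _ (mem (w.dart_snd_mem_support_of_mem_darts hd)) d.adj
  · rw [hc0 x (mem w.start_mem_support) hx, hc0 y (mem w.end_mem_support) hy]

theorem LocallyTwoColorable.twoHomogeneous {G : SimpleGraph ℕ} (hG : LocallyTwoColorable G)
    {H : Set ℕ} (hH : ∀ x ∈ H, ∀ y ∈ H, ∀ w : G.Walk x y, Even w.length) :
    TwoHomogeneous G H := by
  intro V₀
  obtain ⟨c, hc⟩ := hG V₀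
  let G₀ := (G.induce (V₀ : Set ℕ)).spanningCoe
  let C : G₀.Coloring (Fin 2) :=
    Coloring.mk c fun h => by
      obtain ⟨⟨x, hx⟩, ⟨y, hy⟩, hxy, rfl, rfl⟩ := (map_adj _ _ _ _).1 h
      exact hc x hx y hy hxy
  obtain ⟨C', hC'⟩ := C.exists_eq_zero_on (F := H) fun x hx y hy ⟨w⟩ =>
    (w.apply_eq_iff_even_length fun d _ => C.valid d.adj).2 <| by
      simpa only [Walk.length_mapLe] using hH x hx y hy (w.mapLe (spanningCoe_induce_le G _))
  refine ⟨C', fun x hx y hy hxy => C'.valid ?_, fun x _ hxH => hC' x hxH⟩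
  exact (map_adj _ _ _ _).2 ⟨⟨x, hx⟩, ⟨y, hy⟩, hxy, rfl, rfl⟩

/-- **Characterization of extendible finite sets in locally 2-colorable graphs.**
A finite `F ⊆ ℕ` is 2-homogeneous for a locally 2-colorable graph `G` iff no two
vertices of `F` are the endpoints of a walk of odd length in `G`. -/
theorem two_homogeneous_iff_no_odd_walk (G : SimpleGraph ℕ)
    (hG : LocallyTwoColorable G) (F : Finset ℕ) :
    TwoHomogeneous G ↑F ↔
      ∀ x ∈ F, ∀ y ∈ F, ¬ ∃ w : G.Walk x y, Odd w.length := by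
  simp only [not_exists, Nat.not_odd_iff_even]
  exact ⟨fun h x hx y hy => h.even_length hx hy, hG.twoHomogeneous⟩
end
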